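/- For τ, λ not in {0, −1/2, −1, …, −(k−1)/2}, the bilinear map J_k^{τ,λ}(φ,ψ) = Σ_{i+j=k} (−1)^j · C(2τ+k−1, j) · C(2λ+k−1, i) · φ⁽ⁱ⁾ ψ⁽ʲ⁾ satisfies the sl(2)-invariance identity with respect to X = x² d/dx: J_k^{τ,λ}(L^τ_{x²}φ, ψ) + J_k^{τ,λ}(φ, L^λ_{x²}ψ) = L^{τ+λ+k}_{x²}(J_k^{τ,λ}(φ,ψ)), where L^μ_{x²}(f) = x² f' + 2μ x f and C(x,i) = x(x−1)⋯(x−i+1)/i! is the generalized binomial coefficient. -/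

import Mathlib

open Polynomial

/-- The action `L^μ_X(f) = X f' + μ X' f` of `X d/dx` on μ-densities; for
`X = x²` this is `L^μ_{x²}(f) = x² f' + 2μ x f`. -/
noncomputable def Lact (mu : ℝ) (Xp f : Polynomial ℝ) : Polynomial ℝ :=
  Xp * derivative f + mu • (derivative Xp * f)

/-- Generalized binomial coefficient `C(x,i) = x(x−1)⋯(x−i+1)/i!`. -/
noncomputable def gbin (x : ℝ) (i : ℕ) : ℝ :=
  (∏ j ∈ Finset.range i, (x - j)) / (Nat.factorial i)

/-- The transvectant
`J_k^{τ,λ}(φ,ψ) = Σ_{i+j=k} (−1)^j C(2τ+k−1,j) C(2λ+k−1,i) φ⁽ⁱ⁾ ψ⁽ʲ⁾`. -/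
noncomputable def Jk (k : ℕ) (tau lam : ℝ) (phi psi : Polynomial ℝ) : Polynomial ℝ :=
  ∑ i ∈ Finset.range (k + 1),
    (((-1 : ℝ) ^ (k - i)) * gbin (2 * tau + k - 1) (k - i) * gbin (2 * lam + k - 1) i) •
      (derivative^[i] phi * derivative^[k - i] psi)

/-!
For `B_c(φ, ψ) = Σ_{i+j=n} c_i φ⁽ⁱ⁾ ψ⁽ʲ⁾` (`bidiff n c`), differentiating
`L^μ_{x²} f = x² f' + 2μ x f` `i` times gives `x² f⁽ⁱ⁺¹⁾ + (2i + 2μ) x f⁽ⁱ⁾ + i(i − 1 + 2μ) f⁽ⁱ⁻¹⁾`.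
Summed over `i + j = n`, the first two terms assemble into `L^{τ+λ+n}_{x²} B_c(φ, ψ)`, and the
lowering terms, regrouped by `φ⁽ⁱ⁾ ψ⁽ʲ⁾` with `i + j = n − 1`, have the coefficients
`(i+1)(i+2τ) c_{i+1} + (j+1)(j+2λ) c_i`. For the coefficients of `J_k^{τ,λ}` these vanish by the
recurrence `(i+1) C(x, i+1) = (x − i) C(x, i)` of the binomial coefficients.
-/

lemma gbin_succ_mul (x : ℝ) (i : ℕ) : gbin x (i + 1) * (i + 1) = gbin x i * (x - i) := by
  have h : (Nat.factorial i : ℝ) ≠ 0 := Nat.cast_ne_zero.2 i.factorial_ne_zero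
  unfold gbin
  rw [Finset.prod_range_succ, Nat.factorial_succ]
  push_cast
  field_simp

lemma iterate_derivative_Lact_X_sq (mu : ℝ) (f : ℝ[X]) (i : ℕ) :
    derivative^[i] (Lact mu (X ^ 2) f) =
      X ^ 2 * derivative^[i + 1] f
        + (2 * (i : ℝ) + 2 * mu) • (X * derivative^[i] f)
        + ((i : ℝ) * ((i : ℝ) - 1 + 2 * mu)) • derivative^[i - 1] f := by
  induction i with
  | zero =>
      simp only [zero_add, Function.iterate_zero_apply, Function.iterate_one, Nat.cast_zero,
        mul_zero, zero_mul, zero_smul, add_zero, Lact, derivative_X_pow, smul_eq_C_mul, C_mul,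
        Nat.cast_ofNat]
      ring
  | succ n ih =>
      have h0 : derivative (((n:ℝ) * ((n:ℝ) - 1 + 2*mu)) • (⇑derivative)^[n-1] f)
          = ((n:ℝ) * ((n:ℝ) - 1 + 2*mu)) • (⇑derivative)^[n] f := by
        rcases n with _ | m
        · simp
        · rw [derivative_smul, Nat.add_sub_cancel,
            Function.iterate_succ_apply' (⇑derivative) m f]
      rw [Function.iterate_succ_apply', ih, derivative_add, derivative_add, h0,
        derivative_mul, derivative_smul, derivative_mul, derivative_X_pow, derivative_X,
        ← Function.iterate_succ_apply' derivative n, ← Function.iterate_succ_apply' derivative,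
        Nat.add_sub_cancel]
      simp only [smul_eq_C_mul, C_add, C_mul, C_sub, C_1, C_eq_natCast, map_ofNat,
        Nat.cast_add, Nat.cast_one, Nat.cast_ofNat]
      ring

lemma iterate_derivative_Lact_mul_add (tau lam : ℝ) (phi psi : ℝ[X]) (i j : ℕ) :
    derivative^[i] (Lact tau (X ^ 2) phi) * derivative^[j] psi
        + derivative^[i] phi * derivative^[j] (Lact lam (X ^ 2) psi)
      = X ^ 2 * (derivative^[i + 1] phi * derivative^[j] psi
            + derivative^[i] phi * derivative^[j + 1] psi)
        + (tau + lam + ↑(i + j)) • (2 * X * (derivative^[i] phi * derivative^[j] psi))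
        + ((i : ℝ) * ((i : ℝ) - 1 + 2 * tau)) • (derivative^[i - 1] phi * derivative^[j] psi)
        + ((j : ℝ) * ((j : ℝ) - 1 + 2 * lam)) • (derivative^[i] phi * derivative^[j - 1] psi) := by
  simp only [iterate_derivative_Lact_X_sq, smul_eq_C_mul, C_add, C_mul, C_sub, C_1,
    C_eq_natCast, map_ofNat, Nat.cast_add]
  ring

noncomputable def bidiff (n : ℕ) (c : ℕ → ℝ) (phi psi : ℝ[X]) : ℝ[X] :=
  ∑ i ∈ Finset.range (n + 1), c i • (derivative^[i] phi * derivative^[n - i] psi)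

lemma derivative_bidiff (n : ℕ) (c : ℕ → ℝ) (phi psi : ℝ[X]) :
    derivative (bidiff n c phi psi)
      = ∑ i ∈ Finset.range (n + 1), c i • (derivative^[i + 1] phi * derivative^[n - i] psi
          + derivative^[i] phi * derivative^[n - i + 1] psi) := by
  rw [bidiff, derivative_sum]
  refine Finset.sum_congr rfl fun i _ => ?_
  rw [derivative_smul, derivative_mul, Function.iterate_succ_apply', Function.iterate_succ_apply']

lemma sum_lowering_terms_eq_zero (n : ℕ) (c : ℕ → ℝ) (tau lam : ℝ)
    (hc : ∀ i j : ℕ, i + j + 1 = n →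
      ((i : ℝ) + 1) * (i + 2 * tau) * c (i + 1) + ((j : ℝ) + 1) * (j + 2 * lam) * c i = 0)
    (phi psi : ℝ[X]) :
    ∑ i ∈ Finset.range (n + 1), c i •
        (((i : ℝ) * ((i : ℝ) - 1 + 2 * tau)) • (derivative^[i - 1] phi * derivative^[n - i] psi)
        + ((↑(n - i) : ℝ) * ((↑(n - i) : ℝ) - 1 + 2 * lam)) •
            (derivative^[i] phi * derivative^[n - i - 1] psi)) = 0 := by
  rw [Finset.sum_congr rfl fun i _ => smul_add (c i) _ _, Finset.sum_add_distrib,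
    Finset.sum_range_succ' _ n, Finset.sum_range_succ _ n]
  simp only [Nat.cast_zero, zero_mul, zero_smul, smul_zero, add_zero, Nat.sub_self,
    Nat.add_sub_cancel, Nat.sub_sub, smul_smul, ← Finset.sum_add_distrib, ← add_smul]
  refine Finset.sum_eq_zero fun i hi => ?_
  obtain ⟨j, rfl⟩ : ∃ j, n = i + j + 1 := ⟨n - i - 1, by have := Finset.mem_range.1 hi; omega⟩
  rw [show i + j + 1 - i = j + 1 by omega]
  convert zero_smul ℝ _
  push_cast
  linear_combination hc i j rfl

theorem bidiff_Lact_X_sq_add (n : ℕ) (c : ℕ → ℝ) (tau lam : ℝ)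
    (hc : ∀ i j : ℕ, i + j + 1 = n →
      ((i : ℝ) + 1) * (i + 2 * tau) * c (i + 1) + ((j : ℝ) + 1) * (j + 2 * lam) * c i = 0)
    (phi psi : ℝ[X]) :
    bidiff n c (Lact tau (X ^ 2) phi) psi + bidiff n c phi (Lact lam (X ^ 2) psi)
      = Lact (tau + lam + n) (X ^ 2) (bidiff n c phi psi) := by
  have hterm : ∀ i ∈ Finset.range (n + 1),
      c i • (derivative^[i] (Lact tau (X ^ 2) phi) * derivative^[n - i] psi)
        + c i • (derivative^[i] phi * derivative^[n - i] (Lact lam (X ^ 2) psi))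
      = X ^ 2 * c i • (derivative^[i + 1] phi * derivative^[n - i] psi
            + derivative^[i] phi * derivative^[n - i + 1] psi)
        + (tau + lam + n) • (C 2 * X * c i • (derivative^[i] phi * derivative^[n - i] psi))
        + c i • (((i : ℝ) * ((i : ℝ) - 1 + 2 * tau)) •
              (derivative^[i - 1] phi * derivative^[n - i] psi)
            + ((↑(n - i) : ℝ) * ((↑(n - i) : ℝ) - 1 + 2 * lam)) •
              (derivative^[i] phi * derivative^[n - i - 1] psi)) := by
    intro i hi
    rw [← smul_add, iterate_derivative_Lact_mul_add,
      Nat.add_sub_cancel' (Nat.lt_succ_iff.1 (Finset.mem_range.1 hi))]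
    simp only [smul_eq_C_mul, C_ofNat]
    ring
  rw [bidiff, bidiff, ← Finset.sum_add_distrib, Finset.sum_congr rfl hterm,
    Finset.sum_add_distrib, Finset.sum_add_distrib, sum_lowering_terms_eq_zero n c tau lam hc,
    add_zero, ← Finset.mul_sum, ← Finset.smul_sum, ← Finset.mul_sum, ← derivative_bidiff, Lact,
    derivative_X_sq]
  rfl

noncomputable def JkCoeff (k : ℕ) (tau lam : ℝ) (i : ℕ) : ℝ :=
  (-1 : ℝ) ^ (k - i) * gbin (2 * tau + k - 1) (k - i) * gbin (2 * lam + k - 1) i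

lemma Jk_eq_bidiff (k : ℕ) (tau lam : ℝ) : Jk k tau lam = bidiff k (JkCoeff k tau lam) := rfl

lemma JkCoeff_recurrence (k : ℕ) (tau lam : ℝ) (i j : ℕ) (hij : i + j + 1 = k) :
    ((i : ℝ) + 1) * (i + 2 * tau) * JkCoeff k tau lam (i + 1)
      + ((j : ℝ) + 1) * (j + 2 * lam) * JkCoeff k tau lam i = 0 := by
  subst hij
  have hlam := gbin_succ_mul (2 * lam + ↑(i + j + 1) - 1) i
  have htau := gbin_succ_mul (2 * tau + ↑(i + j + 1) - 1) j
  rw [JkCoeff, JkCoeff, show i + j + 1 - (i + 1) = j by omega,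
    show i + j + 1 - i = j + 1 by omega, pow_succ]
  push_cast at hlam htau ⊢
  linear_combination (-1 : ℝ) ^ j * (i + 2 * tau) * gbin (2 * tau + (i + j + 1) - 1) j * hlam
    - (-1 : ℝ) ^ j * (j + 2 * lam) * gbin (2 * lam + (i + j + 1) - 1) i * htau

theorem Jk_sl2_invariant_general (k : ℕ) (tau lam : ℝ)
    (phi psi : Polynomial ℝ) :
    Jk k tau lam (Lact tau (X ^ 2) phi) psi + Jk k tau lam phi (Lact lam (X ^ 2) psi)
      = Lact (tau + lam + k) (X ^ 2) (Jk k tau lam phi psi) := by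
  rw [Jk_eq_bidiff]
  exact bidiff_Lact_X_sq_add k _ tau lam (JkCoeff_recurrence k tau lam) phi psi

/-- For `τ, λ ∉ {0, −1/2, −1, …, −(k−1)/2}`, the transvectant `J_k^{τ,λ}` is
`sl(2)`-invariant with respect to `X = x² d/dx`:
`J_k(L^τ_{x²}φ, ψ) + J_k(φ, L^λ_{x²}ψ) = L^{τ+λ+k}_{x²}(J_k(φ,ψ))`. -/
theorem Jk_sl2_invariant (k : ℕ) (hk : 0 < k) (tau lam : ℝ)
    (htau : ∀ s : ℕ, s < k → tau ≠ -(s : ℝ) / 2)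
    (hlam : ∀ s : ℕ, s < k → lam ≠ -(s : ℝ) / 2)
    (phi psi : Polynomial ℝ) :
    Jk k tau lam (Lact tau (X ^ 2) phi) psi + Jk k tau lam phi (Lact lam (X ^ 2) psi)
      = Lact (tau + lam + k) (X ^ 2) (Jk k tau lam phi psi) :=
  Jk_sl2_invariant_general k tau lam phi psi
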